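/- arXiv:1704.00984 — 3 statements merged into one kernel-verified Lean document; each statement's English description precedes it below -/
import Mathlib

section
/- Let f : [0,T]×Σ×U×A×S → ℤ be given by f(t,x,u,a,p) = Σ_{y∈Σ}(y−x)·1_{(0,λ(t,x,y,a,p))}(u_y) and ν the sum of one-dimensional Lebesgue measures on the coordinate segments U_y. If the rate λ is Lipschitz in (a,p) with constant K_λ, i.e. Σ_{y≠x} |λ(t,x,y,a,p) − λ(t,x,y,b,q)| ≤ K_λ (dist(a,b) + |p−q|) for all t,x, then ∫_U |f(t,x,u,a,p) − f(t,x,u,b,q)| ν(du) ≤ 2d · K_λ · (dist(a,b) + |p−q|) for all t ∈ [0,T], x ∈ Σ, a,b ∈ A, p,q ∈ S. -/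
/-!
On the `y`-th axis of `U` the kernel reduces to `(y - x) · 1_{(0, λ_y)}(r)`, so `ν` integrates the
difference of two kernels axis by axis, and `|1_{(0,c₁)} - 1_{(0,c₂)}| = 1_{(0, max)} - 1_{(0, min)}`
has integral `|c₁ - c₂|` on `[0, M]`. This gives `∑_y |y - x| · |λ_y - λ'_y|`; the term `y = x`
vanishes and `|y - x| ≤ 2d`, so the Lipschitz bound on the rates concludes.
-/

open MeasureTheory

theorem integral_finsetSum_map {α β ι : Type*} [MeasurableSpace α] [MeasurableSpace β]
    {s : Finset ι} {μ : Measure α} {e : ι → α → β} (he : ∀ i, Measurable (e i))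
    {g : β → ℝ} (hg : Measurable g) (hint : ∀ i ∈ s, Integrable (fun r => g (e i r)) μ) :
    ∫ u, g u ∂(∑ i ∈ s, μ.map (e i)) = ∑ i ∈ s, ∫ r, g (e i r) ∂μ := by
  rw [integral_finsetSum_measure fun i hi =>
    (integrable_map_measure hg.aestronglyMeasurable (he i).aemeasurable).2 (hint i hi)]
  exact Finset.sum_congr rfl fun i _ => integral_map (he i).aemeasurable hg.aestronglyMeasurable

theorem abs_indicator_Ioo_sub_indicator_Ioo (c₁ c₂ r : ℝ) :
    |(Set.Ioo 0 c₁).indicator (fun _ => (1 : ℝ)) r - (Set.Ioo 0 c₂).indicator (fun _ => 1) r| =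
      (Set.Ioo 0 (max c₁ c₂)).indicator (fun _ => 1) r -
        (Set.Ioo 0 (min c₁ c₂)).indicator (fun _ => 1) r := by
  rcases le_total c₁ c₂ with h | h
  · rw [max_eq_right h, min_eq_left h, abs_sub_comm, abs_of_nonneg (sub_nonneg.2 _)]
    exact Set.indicator_le_indicator_of_subset (Set.Ioo_subset_Ioo_right h) (fun _ => zero_le_one) r
  · rw [max_eq_left h, min_eq_right h, abs_of_nonneg (sub_nonneg.2 _)]
    exact Set.indicator_le_indicator_of_subset (Set.Ioo_subset_Ioo_right h) (fun _ => zero_le_one) r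

theorem integrable_indicator_Ioo_one {μ : Measure ℝ} [IsFiniteMeasure μ] (c : ℝ) :
    Integrable ((Set.Ioo 0 c).indicator (fun _ => (1 : ℝ))) μ :=
  (integrable_const 1).indicator measurableSet_Ioo

theorem integral_indicator_Ioo_restrict_Icc {M c : ℝ} (hc : c ∈ Set.Icc 0 M) :
    ∫ r, (Set.Ioo 0 c).indicator (fun _ => (1 : ℝ)) r ∂(volume.restrict (Set.Icc 0 M)) = c := by
  rw [integral_indicator measurableSet_Ioo, Measure.restrict_restrict measurableSet_Ioo,
    Set.inter_eq_self_of_subset_left (Set.Ioo_subset_Icc_self.trans (Set.Icc_subset_Icc_right hc.2))]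
  simp [hc.1]

theorem integral_abs_indicator_Ioo_sub_indicator_Ioo {M c₁ c₂ : ℝ}
    (h₁ : c₁ ∈ Set.Icc 0 M) (h₂ : c₂ ∈ Set.Icc 0 M) :
    ∫ r, |(Set.Ioo 0 c₁).indicator (fun _ => (1 : ℝ)) r - (Set.Ioo 0 c₂).indicator (fun _ => 1) r|
      ∂(volume.restrict (Set.Icc 0 M)) = |c₁ - c₂| := by
  simp_rw [abs_indicator_Ioo_sub_indicator_Ioo]
  rw [integral_sub (integrable_indicator_Ioo_one _) (integrable_indicator_Ioo_one _),
    integral_indicator_Ioo_restrict_Icc ⟨le_max_of_le_left h₁.1, max_le h₁.2 h₂.2⟩,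
    integral_indicator_Ioo_restrict_Icc ⟨le_min h₁.1 h₂.1, min_le_of_left_le h₁.2⟩,
    max_sub_min_eq_abs, abs_sub_comm]

theorem measurable_ite_eq_self_zero {ι : Type*} [DecidableEq ι] (y : ι) :
    Measurable (fun (r : ℝ) (j : ι) => if j = y then r else 0) :=
  measurable_pi_lambda _ fun j => by split_ifs <;> fun_prop

section JumpKernel

variable {ι : Type*} [Fintype ι]

/-- The paper's `f(t, x, u, a, p)`, with jump sizes `c y = y - x` and rates `l y = λ(t, x, y, a, p)`. -/
noncomputable def jumpKernel (c l u : ι → ℝ) : ℝ :=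
  ∑ y, c y * (Set.Ioo 0 (l y)).indicator (fun _ => 1) (u y)

theorem measurable_jumpKernel (c l : ι → ℝ) : Measurable (jumpKernel c l) :=
  Finset.measurable_sum _ fun y _ =>
    ((measurable_const.indicator measurableSet_Ioo).comp (measurable_pi_apply y)).const_mul _

theorem jumpKernel_ite_eq_self_zero [DecidableEq ι] (c l : ι → ℝ) (y : ι) (r : ℝ) :
    jumpKernel c l (fun j => if j = y then r else 0) =
      c y * (Set.Ioo 0 (l y)).indicator (fun _ => 1) r := by
  rw [jumpKernel, Finset.sum_eq_single_of_mem y (Finset.mem_univ y) fun j _ hj => ?_, if_pos rfl]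
  rw [if_neg hj, Set.indicator_of_notMem (fun h => lt_irrefl 0 h.1), mul_zero]

theorem integral_abs_jumpKernel_sub_jumpKernel [DecidableEq ι] {M : ℝ} (c : ι → ℝ)
    {l l' : ι → ℝ} (hl : ∀ y, l y ∈ Set.Icc 0 M) (hl' : ∀ y, l' y ∈ Set.Icc 0 M) :
    ∫ u, |jumpKernel c l u - jumpKernel c l' u|
      ∂(∑ y, (volume.restrict (Set.Icc 0 M)).map (fun r j => if j = y then r else 0)) =
      ∑ y, |c y| * |l y - l' y| := by
  rw [integral_finsetSum_map (g := fun u => |jumpKernel c l u - jumpKernel c l' u|)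
    measurable_ite_eq_self_zero
    ((measurable_jumpKernel c l).sub (measurable_jumpKernel c l')).abs fun y _ => ?_]
  · refine Finset.sum_congr rfl fun y _ => ?_
    simp_rw [jumpKernel_ite_eq_self_zero, ← mul_sub, abs_mul]
    rw [integral_const_mul, integral_abs_indicator_Ioo_sub_indicator_Ioo (hl y) (hl' y)]
  · simp_rw [jumpKernel_ite_eq_self_zero, ← mul_sub, abs_mul]
    exact ((integrable_indicator_Ioo_one _).sub (integrable_indicator_Ioo_one _)).abs.const_mul _

end JumpKernel

theorem sum_abs_natCast_sub_mul_le {d : ℕ} (x : Fin d) {w : Fin d → ℝ} (hw : ∀ y, 0 ≤ w y) :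
    ∑ y : Fin d, |((y : ℕ) : ℝ) + 1 - (((x : ℕ) : ℝ) + 1)| * w y ≤
      2 * d * ∑ y ∈ Finset.univ.erase x, w y := by
  rw [← Finset.sum_erase (a := x) _ (by simp), Finset.mul_sum]
  refine Finset.sum_le_sum fun y _ => mul_le_mul_of_nonneg_right ?_ (hw y)
  have hy : ((y : ℕ) : ℝ) < d := by exact_mod_cast y.isLt
  have hx : ((x : ℕ) : ℝ) < d := by exact_mod_cast x.isLt
  rw [abs_le]
  constructor <;> linarith [(y : ℕ).cast_nonneg (α := ℝ), (x : ℕ).cast_nonneg (α := ℝ)]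

theorem stmt_6_general (d : ℕ) (M T Klam : ℝ)
    {A : Type*} [MetricSpace A]
    (lam : ℝ → Fin d → Fin d → A → (Fin d → ℝ) → ℝ)
    (hlam : ∀ t x y a p, lam t x y a p ∈ Set.Icc 0 M)
    (hlip : ∀ t ∈ Set.Icc (0:ℝ) T, ∀ (x : Fin d) (a b : A),
      ∀ p ∈ stdSimplex ℝ (Fin d), ∀ q ∈ stdSimplex ℝ (Fin d),
      ∑ y ∈ Finset.univ.erase x, |lam t x y a p - lam t x y b q| ≤
        Klam * (dist a b + Real.sqrt (∑ j, (p j - q j)^2)))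
    (ν : Measure (Fin d → ℝ))
    (hν : ν = ∑ y : Fin d,
      Measure.map (fun r : ℝ => fun j => if j = y then r else 0)
        (volume.restrict (Set.Icc (0:ℝ) M)))
    (f : ℝ → Fin d → (Fin d → ℝ) → A → (Fin d → ℝ) → ℝ)
    (hf : ∀ t x u a p, f t x u a p =
      ∑ y : Fin d, (((y:ℕ):ℝ) + 1 - (((x:ℕ):ℝ) + 1)) *
        Set.indicator (Set.Ioo (0:ℝ) (lam t x y a p)) (fun _ => (1:ℝ)) (u y)) :
    ∀ t ∈ Set.Icc (0:ℝ) T, ∀ (x : Fin d) (a b : A),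
      ∀ p ∈ stdSimplex ℝ (Fin d), ∀ q ∈ stdSimplex ℝ (Fin d),
      ∫ u, |f t x u a p - f t x u b q| ∂ν ≤
        2 * d * Klam * (dist a b + Real.sqrt (∑ j, (p j - q j)^2)) := by
  intro t ht x a b p hp q hq
  have hf_eq : ∀ u a p, f t x u a p =
      jumpKernel (fun y : Fin d => ((y : ℕ) : ℝ) + 1 - (((x : ℕ) : ℝ) + 1))
        (fun y => lam t x y a p) u := hf t x
  simp only [hν, hf_eq]
  rw [integral_abs_jumpKernel_sub_jumpKernel _ (hlam t x · a p) (hlam t x · b q), mul_assoc]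
  exact (sum_abs_natCast_sub_mul_le x fun y => abs_nonneg _).trans
    (mul_le_mul_of_nonneg_left (hlip t ht x a b p hp q hq) (by positivity))

/-- If the rate `λ` is Lipschitz in `(a,p)` with constant `K_λ` (summed over `y ≠ x`), then the
jump kernel `f(t,x,u,a,p) = ∑_y (y−x) 1_{(0,λ(t,x,y,a,p))}(u_y)` satisfies
`∫_U |f(t,x,u,a,p) − f(t,x,u,b,q)| ν(du) ≤ 2d K_λ (dist(a,b) + |p−q|)`. -/
theorem stmt_6 (d : ℕ) (M T Klam : ℝ) (hM : 0 ≤ M) (hK : 0 ≤ Klam)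
    {A : Type*} [MetricSpace A] [CompactSpace A]
    (lam : ℝ → Fin d → Fin d → A → (Fin d → ℝ) → ℝ)
    (hlam : ∀ t x y a p, lam t x y a p ∈ Set.Icc 0 M)
    (hlip : ∀ t ∈ Set.Icc (0:ℝ) T, ∀ (x : Fin d) (a b : A),
      ∀ p ∈ stdSimplex ℝ (Fin d), ∀ q ∈ stdSimplex ℝ (Fin d),
      ∑ y ∈ Finset.univ.erase x, |lam t x y a p - lam t x y b q| ≤
        Klam * (dist a b + Real.sqrt (∑ j, (p j - q j)^2)))
    (ν : Measure (Fin d → ℝ))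
    (hν : ν = ∑ y : Fin d,
      Measure.map (fun r : ℝ => fun j => if j = y then r else 0)
        (volume.restrict (Set.Icc (0:ℝ) M)))
    (f : ℝ → Fin d → (Fin d → ℝ) → A → (Fin d → ℝ) → ℝ)
    (hf : ∀ t x u a p, f t x u a p =
      ∑ y : Fin d, (((y:ℕ):ℝ) + 1 - (((x:ℕ):ℝ) + 1)) *
        Set.indicator (Set.Ioo (0:ℝ) (lam t x y a p)) (fun _ => (1:ℝ)) (u y)) :
    ∀ t ∈ Set.Icc (0:ℝ) T, ∀ (x : Fin d) (a b : A),
      ∀ p ∈ stdSimplex ℝ (Fin d), ∀ q ∈ stdSimplex ℝ (Fin d),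
      ∫ u, |f t x u a p - f t x u b q| ∂ν ≤
        2 * d * Klam * (dist a b + Real.sqrt (∑ j, (p j - q j)^2)) :=
  stmt_6_general d M T Klam lam hlam hlip ν hν f hf
end

section
/- Suppose c₁ : Σ × S → ℝ and ψ : Σ × S → ℝ satisfy the Lasry–Lions monotonicity conditions: Σ_{x∈Σ}(c₁(x,p) − c₁(x,p'))(p_x − p'_x) > 0 and Σ_{x∈Σ}(ψ(x,p) − ψ(x,p'))(p_x − p'_x) ≥ 0 for all p ≠ p' in S. If m, m' : [0,T] → S are continuous and satisfy 0 ≤ Σ_x (ψ(x,m(T)) − ψ(x,m'(T)))(m'_x(T) − m_x(T)) + ∫_0^T Σ_x (c₁(x,m(t)) − c₁(x,m'(t)))(m'_x(t) − m_x(t)) dt, then m(t) = m'(t) for all t ∈ [0,T]. -/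
/-!
Monotonicity makes both the terminal term and the integrand of the key inequality nonpositive,
and the integrand is strictly negative wherever the flows differ. If they differed at some time,
continuity would keep the integrand negative on a nondegenerate interval, so the integral, hence
the whole right-hand side, would be negative.
-/

open MeasureTheory

section MonotonePairing

variable {ι : Type*} [Fintype ι] {S : Set (ι → ℝ)} {F : ι → (ι → ℝ) → ℝ} {p q : ι → ℝ}

lemma sum_sub_mul_sub_swap :
    ∑ x, (F x p - F x q) * (q x - p x) = -∑ x, (F x p - F x q) * (p x - q x) := by
  rw [← Finset.sum_neg_distrib]
  exact Finset.sum_congr rfl fun x _ => by ring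

lemma sum_sub_mul_sub_swap_nonpos
    (hF : ∀ p ∈ S, ∀ q ∈ S, p ≠ q → 0 ≤ ∑ x, (F x p - F x q) * (p x - q x))
    (hp : p ∈ S) (hq : q ∈ S) :
    ∑ x, (F x p - F x q) * (q x - p x) ≤ 0 := by
  rcases eq_or_ne p q with rfl | hpq
  · simp
  · rw [sum_sub_mul_sub_swap, neg_nonpos]
    exact hF p hp q hq hpq

lemma sum_sub_mul_sub_swap_neg
    (hF : ∀ p ∈ S, ∀ q ∈ S, p ≠ q → 0 < ∑ x, (F x p - F x q) * (p x - q x))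
    (hp : p ∈ S) (hq : q ∈ S) (hpq : p ≠ q) :
    ∑ x, (F x p - F x q) * (q x - p x) < 0 := by
  rw [sum_sub_mul_sub_swap, neg_neg_iff_pos]
  exact hF p hp q hq hpq

end MonotonePairing

lemma setIntegral_Icc_neg_of_continuousOn {f : ℝ → ℝ} {a b c : ℝ} (hab : a < b)
    (hf : ContinuousOn f (Set.Icc a b)) (hle : ∀ x ∈ Set.Icc a b, f x ≤ 0)
    (hc : c ∈ Set.Icc a b) (hfc : f c < 0) :
    ∫ x in Set.Icc a b, f x < 0 := by
  have hpos : 0 < ∫ x in a..b, -f x :=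
    intervalIntegral.integral_pos hab hf.neg
      (fun x hx => neg_nonneg.2 (hle x (Set.Ioc_subset_Icc_self hx))) ⟨c, hc, neg_pos.2 hfc⟩
  rw [intervalIntegral.integral_neg, intervalIntegral.integral_of_le hab.le,
    ← integral_Icc_eq_integral_Ioc] at hpos
  linarith

theorem stmt_7_general (d : ℕ) (T : ℝ) (hT : 0 < T)
    (c₁ ψ : Fin d → (Fin d → ℝ) → ℝ)
    (hc₁cont : ∀ x, Continuous (c₁ x))
    (hmono_c : ∀ p ∈ stdSimplex ℝ (Fin d), ∀ q ∈ stdSimplex ℝ (Fin d), p ≠ q →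
      0 < ∑ x, (c₁ x p - c₁ x q) * (p x - q x))
    (hmono_ψ : ∀ p ∈ stdSimplex ℝ (Fin d), ∀ q ∈ stdSimplex ℝ (Fin d), p ≠ q →
      0 ≤ ∑ x, (ψ x p - ψ x q) * (p x - q x))
    (m m' : ℝ → Fin d → ℝ)
    (hm : ∀ t ∈ Set.Icc (0:ℝ) T, m t ∈ stdSimplex ℝ (Fin d))
    (hm' : ∀ t ∈ Set.Icc (0:ℝ) T, m' t ∈ stdSimplex ℝ (Fin d))
    (hmc : ContinuousOn m (Set.Icc 0 T)) (hm'c : ContinuousOn m' (Set.Icc 0 T))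
    (hineq : 0 ≤ (∑ x, (ψ x (m T) - ψ x (m' T)) * (m' T x - m T x)) +
      ∫ t in Set.Icc (0:ℝ) T, ∑ x, (c₁ x (m t) - c₁ x (m' t)) * (m' t x - m t x)) :
    ∀ t ∈ Set.Icc (0:ℝ) T, m t = m' t := by
  by_contra! ⟨t₀, ht₀, hne⟩
  have hT_mem : T ∈ Set.Icc 0 T := ⟨hT.le, le_rfl⟩
  have hterminal := sum_sub_mul_sub_swap_nonpos hmono_ψ (hm T hT_mem) (hm' T hT_mem)
  have hrunning : ∫ t in Set.Icc (0:ℝ) T,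
      ∑ x, (c₁ x (m t) - c₁ x (m' t)) * (m' t x - m t x) < 0 :=
    setIntegral_Icc_neg_of_continuousOn hT (by fun_prop)
      (fun t ht => sum_sub_mul_sub_swap_nonpos (fun p hp q hq hpq => (hmono_c p hp q hq hpq).le)
        (hm t ht) (hm' t ht))
      ht₀ (sum_sub_mul_sub_swap_neg hmono_c (hm t₀ ht₀) (hm' t₀ ht₀) hne)
  linarith

/-- Under the Lasry–Lions monotonicity conditions on `c₁` (strict) and `ψ` (non-strict), any two
continuous simplex-valued flows `m, m'` satisfying the key inequality obtained from the
optimality of two mean field game solutions must coincide on `[0,T]`. -/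
theorem stmt_7 (d : ℕ) (T : ℝ) (hT : 0 < T)
    (c₁ ψ : Fin d → (Fin d → ℝ) → ℝ)
    (hc₁cont : ∀ x, Continuous (c₁ x)) (hψcont : ∀ x, Continuous (ψ x))
    (hmono_c : ∀ p ∈ stdSimplex ℝ (Fin d), ∀ q ∈ stdSimplex ℝ (Fin d), p ≠ q →
      0 < ∑ x, (c₁ x p - c₁ x q) * (p x - q x))
    (hmono_ψ : ∀ p ∈ stdSimplex ℝ (Fin d), ∀ q ∈ stdSimplex ℝ (Fin d), p ≠ q →
      0 ≤ ∑ x, (ψ x p - ψ x q) * (p x - q x))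
    (m m' : ℝ → Fin d → ℝ)
    (hm : ∀ t ∈ Set.Icc (0:ℝ) T, m t ∈ stdSimplex ℝ (Fin d))
    (hm' : ∀ t ∈ Set.Icc (0:ℝ) T, m' t ∈ stdSimplex ℝ (Fin d))
    (hmc : ContinuousOn m (Set.Icc 0 T)) (hm'c : ContinuousOn m' (Set.Icc 0 T))
    (hineq : 0 ≤ (∑ x, (ψ x (m T) - ψ x (m' T)) * (m' T x - m T x)) +
      ∫ t in Set.Icc (0:ℝ) T, ∑ x, (c₁ x (m t) - c₁ x (m' t)) * (m' t x - m t x)) :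
    ∀ t ∈ Set.Icc (0:ℝ) T, m t = m' t :=
  stmt_7_general d T hT c₁ ψ hc₁cont hmono_c hmono_ψ m m' hm hm' hmc hm'c hineq
end

section
/- Let V, W : [0,T] × Σ → ℝ satisfy the integrated HJB equations V(t,x) = ψ(x,m(T)) + ∫_t^T H*(s,x,m(s),V(s,·)) ds and W(t,x) = ψ(x,n(T)) + ∫_t^T H*(s,x,n(s),W(s,·)) ds, where H*(s,x,p,g) = min_{a∈A} H(s,x,a,p,g) and H satisfies |H*(t,x,p,g) − H*(t,x,q,h)| ≤ C₄|p−q| + C₅ max_y|g_y − h_y| for constants C₄, C₅. Then for all t ∈ [0,T]: max_x |V(t,x) − W(t,x)| ≤ (K₂ + T C₄) e^{C₅ T} · sup_{s∈[0,T]} |m(s) − n(s)|, where K₂ is the Lipschitz constant of ψ in its measure argument. -/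
/-!
Subtracting the two integral equations, the terminal costs differ by at most `K₂ ‖m - n‖` and,
by the Lipschitz bound on `H*`, the integrands by at most `C₄ ‖m - n‖ + C₅ φ(s)`, where
`φ(t) = max_x |V(t,x) - W(t,x)|`. Hence `φ(t) ≤ (K₂ + T C₄) ‖m - n‖ + C₅ ∫_t^T φ`, and a
backward Gronwall inequality gives `φ(t) ≤ (K₂ + T C₄) ‖m - n‖ e^{C₅ (T - t)}`. Since `V` and `W`
are primitives of integrable functions, `φ` is continuous, so `∫_t^T φ` is differentiable in `t`
and the integral inequality reduces to the differential form of Gronwall's inequality.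
-/

open MeasureTheory

noncomputable def eudistFn {d : ℕ} (p q : Fin d → ℝ) : ℝ :=
  Real.sqrt (∑ j, (p j - q j) ^ 2)

open Set Real

theorem eudistFn_nonneg {d : ℕ} (p q : Fin d → ℝ) : 0 ≤ eudistFn p q :=
  sqrt_nonneg _

theorem eudistFn_le_sqrt_of_mem_stdSimplex {d : ℕ} {p q : Fin d → ℝ}
    (hp : p ∈ stdSimplex ℝ (Fin d)) (hq : q ∈ stdSimplex ℝ (Fin d)) : eudistFn p q ≤ √d := by
  refine sqrt_le_sqrt ?_
  calc ∑ j, (p j - q j) ^ 2 ≤ ∑ _j : Fin d, (1 : ℝ) := Finset.sum_le_sum fun j _ => by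
        obtain ⟨hp0, hp1⟩ := mem_Icc_of_mem_stdSimplex hp j
        obtain ⟨hq0, hq1⟩ := mem_Icc_of_mem_stdSimplex hq j
        nlinarith
    _ = d := by simp

theorem ContinuousOn.ciSup_of_fintype {α ι L : Type*} [TopologicalSpace α] [Fintype ι]
    [Nonempty ι] [ConditionallyCompleteLattice L] [TopologicalSpace L] [ContinuousSup L]
    {f : ι → α → L} {s : Set α} (hf : ∀ i, ContinuousOn (f i) s) :
    ContinuousOn (fun x => ⨆ i, f i x) s := by
  simpa only [Finset.sup'_univ_eq_ciSup] using
    ContinuousOn.finset_sup'_apply Finset.univ_nonempty fun i _ => hf i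

theorem continuousOn_of_eq_add_integral_Ioc {f g : ℝ → ℝ} {a b c : ℝ}
    (hg : IntegrableOn g (Icc a b)) (hf : ∀ t ∈ Icc a b, f t = c + ∫ s in Ioc t b, g s) :
    ContinuousOn f (Icc a b) := by
  rcases lt_or_ge b a with hba | hab
  · simp [Icc_eq_empty_of_lt hba]
  rw [← uIcc_of_le hab] at hg ⊢
  refine ((continuousOn_const (c := c)).add
    (intervalIntegral.continuousOn_primitive_interval_left hg)).congr fun t ht => ?_
  rw [uIcc_of_le hab] at ht
  rw [hf t ht, Pi.add_apply, intervalIntegral.integral_of_le ht.2]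

theorem abs_sub_le_abs_sub_add_setIntegral {α : Type*} [MeasurableSpace α] {μ : Measure α}
    {s : Set α} {f g h : α → ℝ} (a b : ℝ) (hs : MeasurableSet s) (hf : IntegrableOn f s μ)
    (hg : IntegrableOn g s μ) (hh : IntegrableOn h s μ) (hfg : ∀ x ∈ s, |f x - g x| ≤ h x) :
    |(a + ∫ x in s, f x ∂μ) - (b + ∫ x in s, g x ∂μ)| ≤ |a - b| + ∫ x in s, h x ∂μ := by
  have hint : |∫ x in s, (f x - g x) ∂μ| ≤ ∫ x in s, h x ∂μ :=
    norm_integral_le_of_norm_le (f := fun x => f x - g x) hh ((ae_restrict_mem hs).mono hfg)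
  rw [integral_sub hf hg] at hint
  calc |(a + ∫ x in s, f x ∂μ) - (b + ∫ x in s, g x ∂μ)|
      = |(a - b) + ((∫ x in s, f x ∂μ) - ∫ x in s, g x ∂μ)| := by ring_nf
    _ ≤ |a - b| + ∫ x in s, h x ∂μ := (abs_add_le _ _).trans (by gcongr)

theorem add_mul_gronwallBound_zero (K A x : ℝ) :
    A + K * gronwallBound 0 K A x = A * exp (K * x) := by
  rcases eq_or_ne K 0 with rfl | hK
  · simp
  · rw [gronwallBound_of_K_ne_0 hK]
    field_simp
    ring

theorem le_mul_exp_of_le_add_mul_integral {φ : ℝ → ℝ} {a b A K : ℝ} (hK : 0 ≤ K)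
    (hφ : ContinuousOn φ (Icc a b)) (h : ∀ t ∈ Icc a b, φ t ≤ A + K * ∫ s in a..t, φ s) :
    ∀ t ∈ Icc a b, φ t ≤ A * exp (K * (t - a)) := by
  set G : ℝ → ℝ := fun t => ∫ s in a..t, φ s
  have hG : ∀ t ∈ Icc a b, HasDerivWithinAt G (φ t) (Icc a b) t := fun t ht => by
    have := Fact.mk ht
    exact intervalIntegral.integral_hasDerivWithinAt_right
      ((hφ.mono (Icc_subset_Icc le_rfl ht.2)).intervalIntegrable_of_Icc ht.1)
      (hφ.stronglyMeasurableAtFilter_nhdsWithin measurableSet_Icc t) (hφ t ht)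
  have hGle : ∀ t ∈ Icc a b, G t ≤ gronwallBound 0 K A (t - a) :=
    le_gronwallBound_of_liminf_deriv_right_le (fun t ht => (hG t ht).continuousWithinAt)
      (fun t ht _ hr => ((hG t (Ico_subset_Icc_self ht)).mono_of_mem_nhdsWithin
        (Icc_mem_nhdsGE_of_mem ht)).liminf_right_slope_le hr)
      (by simp [G]) (fun t ht => by linarith [h t (Ico_subset_Icc_self ht)])
  intro t ht
  calc φ t ≤ A + K * G t := h t ht
    _ ≤ A + K * gronwallBound 0 K A (t - a) := by gcongr; exact hGle t ht
    _ = A * exp (K * (t - a)) := add_mul_gronwallBound_zero K A (t - a)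

theorem le_mul_exp_of_le_add_mul_integral_backward {φ : ℝ → ℝ} {a b A K : ℝ} (hK : 0 ≤ K)
    (hφ : ContinuousOn φ (Icc a b)) (h : ∀ t ∈ Icc a b, φ t ≤ A + K * ∫ s in t..b, φ s) :
    ∀ t ∈ Icc a b, φ t ≤ A * exp (K * (b - t)) := by
  have hφneg : ContinuousOn (fun s => φ (-s)) (Icc (-b) (-a)) :=
    hφ.comp continuousOn_neg fun s hs => ⟨le_neg.1 hs.2, neg_le.1 hs.1⟩
  have hneg : ∀ u ∈ Icc (-b) (-a), φ (-u) ≤ A + K * ∫ s in -b..u, φ (-s) := fun u hu => by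
    simpa [intervalIntegral.integral_comp_neg] using h (-u) ⟨le_neg.1 hu.2, neg_le.1 hu.1⟩
  intro t ht
  simpa [sub_eq_add_neg, add_comm] using
    le_mul_exp_of_le_add_mul_integral hK hφneg hneg (-t) ⟨neg_le_neg ht.2, neg_le_neg ht.1⟩

theorem iSup_abs_sub_le_add_mul_integral {d : ℕ} [Nonempty (Fin d)] {T K₂ C₄ C₅ D : ℝ}
    (hK₂ : 0 ≤ K₂) (hC₄ : 0 ≤ C₄) {ψ : Fin d → (Fin d → ℝ) → ℝ}
    (hψ : ∀ x p q, |ψ x p - ψ x q| ≤ K₂ * eudistFn p q)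
    {Hstar : ℝ → Fin d → (Fin d → ℝ) → (Fin d → ℝ) → ℝ}
    (hH : ∀ t ∈ Icc (0:ℝ) T, ∀ (x : Fin d) (p q g h : Fin d → ℝ),
      |Hstar t x p g - Hstar t x q h| ≤ C₄ * eudistFn p q + C₅ * ⨆ y : Fin d, |g y - h y|)
    {m n V W : ℝ → Fin d → ℝ} (hD : ∀ s ∈ Icc (0:ℝ) T, eudistFn (m s) (n s) ≤ D)
    (hVint : ∀ x, IntegrableOn (fun s => Hstar s x (m s) (V s)) (Icc (0:ℝ) T))
    (hWint : ∀ x, IntegrableOn (fun s => Hstar s x (n s) (W s)) (Icc (0:ℝ) T))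
    (hV : ∀ t ∈ Icc (0:ℝ) T, ∀ x, V t x = ψ x (m T) + ∫ s in Ioc t T, Hstar s x (m s) (V s))
    (hW : ∀ t ∈ Icc (0:ℝ) T, ∀ x, W t x = ψ x (n T) + ∫ s in Ioc t T, Hstar s x (n s) (W s))
    (hφ : ContinuousOn (fun s => ⨆ y, |V s y - W s y|) (Icc 0 T)) :
    ∀ t ∈ Icc (0:ℝ) T, ⨆ y, |V t y - W t y| ≤
      (K₂ + T * C₄) * D + C₅ * ∫ s in t..T, ⨆ y, |V s y - W s y| := by
  intro t ht
  set φ : ℝ → ℝ := fun s => ⨆ y, |V s y - W s y|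
  have hD0 : 0 ≤ D := (eudistFn_nonneg _ _).trans (hD t ht)
  have hsub' : Icc t T ⊆ Icc 0 T := Icc_subset_Icc_left ht.1
  have hsub : Ioc t T ⊆ Icc 0 T := Ioc_subset_Icc_self.trans hsub'
  have hφint : IntegrableOn φ (Ioc t T) := hφ.integrableOn_Icc.mono_set hsub
  refine ciSup_le fun y => ?_
  calc |V t y - W t y| ≤ |ψ y (m T) - ψ y (n T)| + ∫ s in Ioc t T, (C₄ * D + C₅ * φ s) := by
        rw [hV t ht y, hW t ht y]
        refine abs_sub_le_abs_sub_add_setIntegral _ _ measurableSet_Ioc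
          ((hVint y).mono_set hsub) ((hWint y).mono_set hsub)
          ((integrableOn_const measure_Ioc_lt_top.ne).add (hφint.const_mul C₅)) fun s hs => ?_
        refine (hH s (hsub hs) y _ _ _ _).trans ?_
        gcongr
        exact hD s (hsub hs)
    _ = |ψ y (m T) - ψ y (n T)| + (C₄ * D * (T - t) + C₅ * ∫ s in t..T, φ s) := by
        rw [← intervalIntegral.integral_of_le ht.2, intervalIntegral.integral_add
          intervalIntegrable_const (((hφ.mono hsub').intervalIntegrable_of_Icc ht.2).const_mul C₅),
          intervalIntegral.integral_const, intervalIntegral.integral_const_mul, smul_eq_mul]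
        ring
    _ ≤ K₂ * D + (C₄ * D * T + C₅ * ∫ s in t..T, φ s) := by
        gcongr
        · exact (hψ y _ _).trans (by gcongr; exact hD T ⟨ht.1.trans ht.2, le_rfl⟩)
        · linarith [ht.1]
    _ = (K₂ + T * C₄) * D + C₅ * ∫ s in t..T, φ s := by ring

theorem stmt_15_general (d : ℕ) (T K₂ C₄ C₅ : ℝ)
    (hK₂ : 0 ≤ K₂) (hC₄ : 0 ≤ C₄) (hC₅ : 0 ≤ C₅)
    (ψ : Fin d → (Fin d → ℝ) → ℝ)
    (hψ : ∀ x p q, |ψ x p - ψ x q| ≤ K₂ * eudistFn p q)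
    (Hstar : ℝ → Fin d → (Fin d → ℝ) → (Fin d → ℝ) → ℝ)
    (hH : ∀ t ∈ Set.Icc (0:ℝ) T, ∀ (x : Fin d) (p q g h : Fin d → ℝ),
      |Hstar t x p g - Hstar t x q h| ≤ C₄ * eudistFn p q + C₅ * ⨆ y : Fin d, |g y - h y|)
    (m n : ℝ → Fin d → ℝ)
    (hm : ∀ s ∈ Set.Icc (0:ℝ) T, m s ∈ stdSimplex ℝ (Fin d))
    (hn : ∀ s ∈ Set.Icc (0:ℝ) T, n s ∈ stdSimplex ℝ (Fin d))
    (V W : ℝ → Fin d → ℝ)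
    (hVint : ∀ x : Fin d, IntegrableOn (fun s => Hstar s x (m s) (V s)) (Set.Icc (0:ℝ) T))
    (hWint : ∀ x : Fin d, IntegrableOn (fun s => Hstar s x (n s) (W s)) (Set.Icc (0:ℝ) T))
    (hV : ∀ t ∈ Set.Icc (0:ℝ) T, ∀ x : Fin d,
      V t x = ψ x (m T) + ∫ s in Set.Ioc t T, Hstar s x (m s) (V s))
    (hW : ∀ t ∈ Set.Icc (0:ℝ) T, ∀ x : Fin d,
      W t x = ψ x (n T) + ∫ s in Set.Ioc t T, Hstar s x (n s) (W s)) :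
    ∀ t ∈ Set.Icc (0:ℝ) T, ∀ x : Fin d,
      |V t x - W t x| ≤ (K₂ + T * C₄) * Real.exp (C₅ * T) *
        ⨆ s : Set.Icc (0:ℝ) T, eudistFn (m s) (n s) := by
  intro t ht x
  have : Nonempty (Fin d) := ⟨x⟩
  set D := ⨆ s : Icc (0:ℝ) T, eudistFn (m s) (n s)
  have hD : ∀ s ∈ Icc (0:ℝ) T, eudistFn (m s) (n s) ≤ D := fun s hs =>
    le_ciSup (f := fun s : Icc (0:ℝ) T => eudistFn (m s) (n s)) ⟨√d, forall_mem_range.2 fun s =>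
      eudistFn_le_sqrt_of_mem_stdSimplex (hm s s.2) (hn s s.2)⟩ ⟨s, hs⟩
  have hφ : ContinuousOn (fun s => ⨆ y, |V s y - W s y|) (Icc 0 T) :=
    ContinuousOn.ciSup_of_fintype fun y =>
      ((continuousOn_of_eq_add_integral_Ioc (hVint y) fun s hs => hV s hs y).sub
        (continuousOn_of_eq_add_integral_Ioc (hWint y) fun s hs => hW s hs y)).abs
  have hkey := iSup_abs_sub_le_add_mul_integral hK₂ hC₄ hψ hH hD hVint hWint hV hW hφ
  calc |V t x - W t x| ≤ ⨆ y, |V t y - W t y| :=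
        le_ciSup (f := fun y => |V t y - W t y|) (finite_range _).bddAbove x
    _ ≤ (K₂ + T * C₄) * D * exp (C₅ * (T - t)) :=
        le_mul_exp_of_le_add_mul_integral_backward hC₅ hφ hkey t ht
    _ ≤ (K₂ + T * C₄) * exp (C₅ * T) * D := by
        have hD0 : 0 ≤ D := (eudistFn_nonneg _ _).trans (hD t ht)
        have hT : 0 ≤ T := ht.1.trans ht.2
        rw [mul_right_comm]
        gcongr
        linarith [ht.1]

/-- Stability of the value function with respect to the flow of measures: if `V, W` solve the
integrated HJB equations associated with flows `m, n` and the minimized Hamiltonian `H*` is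
Lipschitz in `(p,g)` with constants `C₄, C₅`, then
`max_x |V(t,x) − W(t,x)| ≤ (K₂ + T C₄) e^{C₅ T} ‖m − n‖_∞`. -/
theorem stmt_15 (d : ℕ) (T K₂ C₄ C₅ : ℝ)
    (hT : 0 ≤ T) (hK₂ : 0 ≤ K₂) (hC₄ : 0 ≤ C₄) (hC₅ : 0 ≤ C₅)
    (ψ : Fin d → (Fin d → ℝ) → ℝ)
    (hψ : ∀ x p q, |ψ x p - ψ x q| ≤ K₂ * eudistFn p q)
    (Hstar : ℝ → Fin d → (Fin d → ℝ) → (Fin d → ℝ) → ℝ)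
    (hH : ∀ t ∈ Set.Icc (0:ℝ) T, ∀ (x : Fin d) (p q g h : Fin d → ℝ),
      |Hstar t x p g - Hstar t x q h| ≤ C₄ * eudistFn p q + C₅ * ⨆ y : Fin d, |g y - h y|)
    (m n : ℝ → Fin d → ℝ)
    (hm : ∀ s ∈ Set.Icc (0:ℝ) T, m s ∈ stdSimplex ℝ (Fin d))
    (hn : ∀ s ∈ Set.Icc (0:ℝ) T, n s ∈ stdSimplex ℝ (Fin d))
    (V W : ℝ → Fin d → ℝ)
    (hVint : ∀ x : Fin d, IntegrableOn (fun s => Hstar s x (m s) (V s)) (Set.Icc (0:ℝ) T))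
    (hWint : ∀ x : Fin d, IntegrableOn (fun s => Hstar s x (n s) (W s)) (Set.Icc (0:ℝ) T))
    (hV : ∀ t ∈ Set.Icc (0:ℝ) T, ∀ x : Fin d,
      V t x = ψ x (m T) + ∫ s in Set.Ioc t T, Hstar s x (m s) (V s))
    (hW : ∀ t ∈ Set.Icc (0:ℝ) T, ∀ x : Fin d,
      W t x = ψ x (n T) + ∫ s in Set.Ioc t T, Hstar s x (n s) (W s)) :
    ∀ t ∈ Set.Icc (0:ℝ) T, ∀ x : Fin d,
      |V t x - W t x| ≤ (K₂ + T * C₄) * Real.exp (C₅ * T) *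
        ⨆ s : Set.Icc (0:ℝ) T, eudistFn (m s) (n s) :=
  stmt_15_general d T K₂ C₄ C₅ hK₂ hC₄ hC₅ ψ hψ Hstar hH m n hm hn V W hVint hWint hV hW
end
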